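/- The natural density of nonsquarefree numbers is 1 − 6/π²: the quantity (#{n : 1 ≤ n ≤ N and n is not squarefree})/N tends to 1 − 6/π² as N → ∞. -/

import Mathlib

/-!
Write `n = b² a` with `a` squarefree; then `d² ∣ n ↔ d ∣ b`, so `∑_{d² ∣ n} μ d` is `1` if `n` is
squarefree and `0` otherwise. Summing over `n ≤ N` gives
`#{n ≤ N squarefree} = ∑_d μ d ⌊N / d²⌋`. After dividing by `N`, the `d`-th term tends to
`μ d / d²` and is bounded by `1 / d²`, so by dominated convergence the squarefree numbers have
density `∑ μ d / d² = 1 / ζ 2 = 6 / π²`.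
-/

open Filter Real Finset ArithmeticFunction
open scoped ArithmeticFunction.Moebius LSeries.notation Topology

theorem Nat.sq_dvd_sq_mul_iff_of_squarefree {a b d : ℕ} (ha : Squarefree a) :
    d ^ 2 ∣ b ^ 2 * a ↔ d ∣ b := by
  refine ⟨fun h => ?_, fun h => (pow_dvd_pow_of_dvd h 2).mul_right a⟩
  rcases (d.gcd b).eq_zero_or_pos with hg | hg
  · simp [(Nat.gcd_eq_zero_iff.mp hg).2]
  obtain ⟨g, d', b', hg0, hcop, rfl, rfl⟩ := Nat.exists_coprime' hg
  have h' : d' ^ 2 ∣ b' ^ 2 * a := by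
    rw [mul_pow, mul_pow, mul_right_comm] at h
    exact (mul_dvd_mul_iff_right (pow_pos hg0 2).ne').mp h
  have hd' : d' = 1 :=
    Nat.isUnit_iff.mp (ha d' (sq d' ▸ (hcop.pow 2 2).dvd_of_dvd_mul_left h'))
  simp [hd']

theorem ArithmeticFunction.sum_moebius_sq_dvd {n : ℕ} (hn : n ≠ 0) :
    ∑ d ∈ n.divisors with d ^ 2 ∣ n, μ d = if Squarefree n then 1 else 0 := by
  obtain ⟨a, b, rfl, ha⟩ := Nat.sq_mul_squarefree n
  have hb : b ≠ 0 := by rintro rfl; simp at hn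
  have hdiv : {d ∈ (b ^ 2 * a).divisors | d ^ 2 ∣ b ^ 2 * a} = b.divisors := by
    ext d
    simp only [mem_filter, Nat.mem_divisors, Nat.sq_dvd_sq_mul_iff_of_squarefree ha]
    refine ⟨fun h => ⟨h.2, hb⟩, fun h => ⟨⟨?_, hn⟩, h.1⟩⟩
    exact (h.1.trans (dvd_pow_self b two_ne_zero)).mul_right a
  have hsq : Squarefree (b ^ 2 * a) ↔ b = 1 :=
    ⟨fun h => Nat.isUnit_iff.mp (h b ⟨a, by ring⟩), by rintro rfl; simpa using ha⟩
  rw [hdiv, ← coe_mul_zeta_apply, moebius_mul_coe_zeta, one_apply]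
  simp only [hsq]

theorem card_filter_squarefree_Icc (N : ℕ) :
    (#{n ∈ Icc 1 N | Squarefree n} : ℤ) = ∑ d ∈ range (N + 1), μ d * (N / d ^ 2 : ℕ) := by
  calc (#{n ∈ Icc 1 N | Squarefree n} : ℤ)
      = ∑ n ∈ Icc 1 N, ∑ d ∈ n.divisors with d ^ 2 ∣ n, μ d := by
        rw [card_filter, Nat.cast_sum]
        refine sum_congr rfl fun n hn => ?_
        rw [sum_moebius_sq_dvd (by grind)]
        split_ifs <;> rfl
    _ = ∑ d ∈ range (N + 1), ∑ n ∈ Icc 1 N with d ^ 2 ∣ n, μ d := by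
        refine sum_comm' fun n d => ?_
        simp only [mem_Icc, mem_filter, Nat.mem_divisors, mem_range]
        constructor
        · rintro ⟨⟨h1, hN⟩, ⟨hdn, -⟩, hsq⟩
          exact ⟨⟨⟨h1, hN⟩, hsq⟩, by have := Nat.le_of_dvd h1 hdn; omega⟩
        · rintro ⟨⟨⟨h1, hN⟩, hsq⟩, _⟩
          exact ⟨⟨h1, hN⟩, ⟨(dvd_pow_self d two_ne_zero).trans hsq, by omega⟩, hsq⟩
    _ = ∑ d ∈ range (N + 1), μ d * (N / d ^ 2 : ℕ) := by
        refine sum_congr rfl fun d _ => ?_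
        rw [sum_const, nsmul_eq_mul, mul_comm, ← Nat.Ioc_filter_dvd_card_eq_div,
          ← Icc_add_one_left_eq_Ioc, zero_add]

theorem tendsto_natCast_div_div_atTop (k : ℕ) :
    Tendsto (fun N : ℕ => ((N / k : ℕ) : ℝ) / N) atTop (𝓝 (1 / k)) := by
  rcases eq_or_ne k 0 with rfl | hk
  · simp
  have hk' : (0 : ℝ) < k := by positivity
  have hfloor := tendsto_nat_floor_div_atTop.comp
    (tendsto_natCast_atTop_atTop.atTop_div_const hk')
  convert hfloor.mul_const (1 / (k : ℝ)) using 1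
  · ext N
    simp only [Function.comp_apply, Nat.floor_div_eq_div]
    field_simp
  · rw [one_mul]

theorem tendsto_tsum_mul_natCast_div_div {a : ℕ → ℝ} (g : ℕ → ℕ)
    (ha : Summable fun d => |a d| / g d) :
    Tendsto (fun N : ℕ => ∑' d, a d * (N / g d : ℕ) / N) atTop (𝓝 (∑' d, a d / g d)) := by
  refine tendsto_tsum_of_dominated_convergence ha (fun d => ?_)
    (Eventually.of_forall fun N d => ?_)
  · simpa only [mul_div_assoc, mul_one_div] using
      (tendsto_natCast_div_div_atTop (g d)).const_mul (a d)
  · have hfloor : ((N / g d : ℕ) : ℝ) / N ≤ 1 / g d := by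
      rcases eq_or_ne N 0 with rfl | hN
      · simp
      rw [div_le_iff₀ (by positivity), one_div_mul_eq_div]
      exact Nat.cast_div_le
    rw [norm_div, norm_mul, Real.norm_eq_abs, mul_div_assoc, div_eq_mul_one_div |a d|]
    simp only [Real.norm_natCast]
    gcongr

theorem tsum_moebius_div_sq : ∑' d : ℕ, (μ d : ℝ) / d ^ 2 = 6 / π ^ 2 := by
  have hL : L ↗μ 2 = 6 / (π : ℂ) ^ 2 := by
    have h := LSeries_zeta_mul_Lseries_moebius (s := 2) (by norm_num)
    rw [LSeries_zeta_eq_riemannZeta (by norm_num), riemannZeta_two] at h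
    have hπ : (π : ℂ) ≠ 0 := Complex.ofReal_ne_zero.mpr pi_ne_zero
    field_simp at h ⊢
    linear_combination h
  have hterm (d : ℕ) : (((μ d : ℝ) / d ^ 2 : ℝ) : ℂ) = LSeries.term ↗μ 2 d := by
    rcases eq_or_ne d 0 with rfl | hd
    · simp
    · simp [LSeries.term_of_ne_zero hd]
  apply Complex.ofReal_injective
  rw [Complex.ofReal_tsum, tsum_congr hterm]
  push_cast
  exact hL

theorem tendsto_card_filter_squarefree_Icc_div :
    Tendsto (fun N : ℕ => (#{n ∈ Icc 1 N | Squarefree n} : ℝ) / N) atTop (𝓝 (6 / π ^ 2)) := by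
  have hsum : Summable fun d : ℕ => |(μ d : ℝ)| / (d ^ 2 : ℕ) := by
    refine (summable_one_div_nat_pow.mpr one_lt_two).of_nonneg_of_le (fun d => by positivity)
      fun d => ?_
    push_cast
    gcongr
    exact_mod_cast abs_moebius_le_one
  have hcount (N : ℕ) : (#{n ∈ Icc 1 N | Squarefree n} : ℝ) / N =
      ∑' d, (μ d : ℝ) * (N / d ^ 2 : ℕ) / N := by
    rw [tsum_div_const, tsum_eq_sum (s := range (N + 1)) fun d hd => ?_]
    · rw [← Int.cast_natCast, card_filter_squarefree_Icc, Int.cast_sum]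
      simp only [Int.cast_mul, Int.cast_natCast]
    · have : N < d ^ 2 := by
        rw [mem_range, not_lt] at hd
        nlinarith
      simp [Nat.div_eq_of_lt this]
  simpa only [← hcount, Nat.cast_pow, tsum_moebius_div_sq] using
    tendsto_tsum_mul_natCast_div_div (fun d => d ^ 2) hsum

theorem density_nonsquarefree :
    Filter.Tendsto
      (fun N : ℕ =>
        (((Finset.Icc 1 N).filter (fun n => ¬ Squarefree n)).card : ℝ) / (N : ℝ))
      Filter.atTop (nhds (1 - 6 / Real.pi ^ 2)) := by
  refine (tendsto_const_nhds.sub tendsto_card_filter_squarefree_Icc_div).congr' ?_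
  filter_upwards [eventually_ne_atTop 0] with N hN
  have hcard : (#{n ∈ Icc 1 N | Squarefree n} : ℝ) + #{n ∈ Icc 1 N | ¬Squarefree n} = N := by
    exact_mod_cast (card_filter_add_card_filter_not _).trans (Nat.card_Icc 1 N)
  field_simp
  linarith
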